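/- Let λ, λ₀, and λ_n (n ∈ ℕ) be finite Borel measures on a compact metric space X with λ₀ ≠ 0, λ_n ≪ λ for all n, λ₀ ≪ λ, and sup over measurable sets A of |λ_n(A) − λ₀(A)| tends to 0 as n → ∞ (i.e., λ_n → λ₀ in total variation). Let T : X → Y be a measurable map into a measurable space Y whose σ-algebra is countably generated and contains all singleton sets, and let μ be a σ-finite measure on Y with T_*λ ≪ μ. Let (λ_t^n), (λ_t^0), and (λ_t) be (T,μ)-disintegrations of λ_n, λ₀, and λ respectively. Then there exist a μ-null set E ⊆ Y and a strictly increasing sequence (n_k) of natural numbers such that for every t ∉ E, the supremum over measurable sets A ⊆ X of |λ_t^{n_k}(A) − λ_t^0(A)| tends to 0 as k → ∞. -/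

import Mathlib

open MeasureTheory ENNReal

/-- A `(T, μ)`-disintegration of a measure `ν` on `X`. -/
def IsDisintegration {X Y : Type*} [MeasurableSpace X] [MeasurableSpace Y]
    (ν : Measure X) (T : X → Y) (μ : Measure Y) (lam : Y → Measure X) : Prop :=
  (∀ᵐ t ∂μ, lam t ((T ⁻¹' {t})ᶜ) = 0) ∧
  (∀ f : X → ℝ≥0∞, Measurable f →
      AEMeasurable (fun t => ∫⁻ x, f x ∂(lam t)) μ) ∧
  (∀ f : X → ℝ≥0∞, Measurable f →
      ∫⁻ x, f x ∂ν = ∫⁻ t, ∫⁻ x, f x ∂(lam t) ∂μ)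


/-- The total-variation-type distance between two (possibly infinite) measures:
the supremum over measurable sets of `|α A - β A|`, computed in `ℝ≥0∞` via
truncated subtraction. -/
noncomputable def tvDist {X : Type*} [MeasurableSpace X] (α β : Measure X) : ℝ≥0∞ :=
  ⨆ (A : Set X) (_ : MeasurableSet A), ((α A - β A) + (β A - α A))


/-! Let `(A i)` enumerate a countable algebra generating the σ-algebra of `X`. For finite measures
the total variation distance is a supremum over this algebra, so the fibre distance
`tvDist (lamn n t) (lam₀ t)` is dominated by `G n t = ⨆ i, |lamn n t (A i) - lam₀ t (A i)|`.
Choosing an index `σ t` and a sign measurably in `t` and gluing the chosen `A (σ t)` along the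
fibres of `T` yields one measurable set `S ⊆ X`; disintegrating `νn n S - ν₀ S` over `μ` gives
`∫⁻ G n ∂μ ≤ 2 * tvDist (νn n) ν₀ → 0`, and a subsequence of `G n` tends to `0` almost
everywhere. -/

open Filter Topology
open scoped symmDiff

section TVDist

variable {X : Type*} [m : MeasurableSpace X]

lemma tvDist_comm (α β : Measure X) : tvDist α β = tvDist β α := by
  simp only [tvDist, add_comm]

lemma tsub_add_tsub_le_add_measure_symmDiff (α β : Measure X) (S B : Set X) :
    (α S - β S) + (β S - α S) ≤ (α B - β B) + (β B - α B) + (α + β) (S ∆ B) := by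
  have hsub : ∀ (a : Measure X) (U V : Set X), a U ≤ a V + a (U ∆ V) := fun a U V =>
    (measure_mono fun x hx => by by_cases hV : x ∈ V <;> simp_all [Set.mem_symmDiff]).trans
      (measure_union_le V (U ∆ V))
  have hside : ∀ a b : Measure X, a S - b S ≤ (a B - b B) + (a (S ∆ B) + b (S ∆ B)) := by
    intro a b
    rw [tsub_le_iff_left]
    calc a S ≤ a B + a (S ∆ B) := hsub a S B
      _ ≤ (a B - b B) + b B + a (S ∆ B) := by gcongr; exact le_tsub_add
      _ ≤ (a B - b B) + (b S + b (S ∆ B)) + a (S ∆ B) := by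
          gcongr; simpa only [symmDiff_comm] using hsub b B S
      _ = b S + ((a B - b B) + (a (S ∆ B) + b (S ∆ B))) := by ring
  rw [Measure.add_apply]
  rcases le_total (β S) (α S) with h | h
  · rw [tsub_eq_zero_of_le h, add_zero]
    calc α S - β S ≤ (α B - β B) + (α (S ∆ B) + β (S ∆ B)) := hside α β
      _ ≤ (α B - β B) + (β B - α B) + (α (S ∆ B) + β (S ∆ B)) := by gcongr; exact le_self_add
  · rw [tsub_eq_zero_of_le h, zero_add]
    calc β S - α S ≤ (β B - α B) + (β (S ∆ B) + α (S ∆ B)) := hside β α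
      _ ≤ (α B - β B) + (β B - α B) + (α (S ∆ B) + β (S ∆ B)) := by
          rw [add_comm (β (S ∆ B))]; gcongr; exact le_add_self

lemma tvDist_le_iSup_of_generateFrom (α β : Measure X) [IsFiniteMeasure α] [IsFiniteMeasure β]
    {A : ℕ → Set X} (hA : IsSetAlgebra (Set.range A))
    (hgen : m = MeasurableSpace.generateFrom (Set.range A)) :
    tvDist α β ≤ ⨆ i, ((α (A i) - β (A i)) + (β (A i) - α (A i))) := by
  have hdense := Measure.MeasureDense.of_generateFrom_isSetAlgebra_finite (α + β) hA hgen
  refine iSup₂_le fun S hS => ENNReal.le_of_forall_pos_le_add fun ε hε _ => ?_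
  obtain ⟨_, ⟨i, rfl⟩, hi⟩ := hdense.approx S hS (measure_ne_top _ _) ε hε
  rw [ENNReal.ofReal_coe_nnreal] at hi
  calc _ ≤ _ := tsub_add_tsub_le_add_measure_symmDiff α β S (A i)
    _ ≤ _ := add_le_add (le_iSup (fun i => (α (A i) - β (A i)) + (β (A i) - α (A i))) i) hi.le

end TVDist

lemma MeasurableSpace.exists_isSetAlgebra_range_generateFrom (X : Type*) [m : MeasurableSpace X]
    [MeasurableSpace.CountablyGenerated X] :
    ∃ A : ℕ → Set X, IsSetAlgebra (Set.range A) ∧ m = generateFrom (Set.range A) := by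
  obtain ⟨b, hbc, rfl⟩ := MeasurableSpace.CountablyGenerated.isCountablyGenerated (α := X)
  obtain ⟨A, hA⟩ := (countable_generateSetAlgebra hbc).exists_eq_range
    ⟨∅, isSetAlgebra_generateSetAlgebra.empty_mem⟩
  exact ⟨A, hA ▸ isSetAlgebra_generateSetAlgebra, by rw [← hA, generateFrom_generateSetAlgebra_eq]⟩

section IndexedFamilies

variable {Y β : Type*} [MeasurableSpace Y] [MeasurableSpace β]

lemma Measurable.apply_index {f : ℕ → Y → β} (hf : ∀ i, Measurable (f i)) {σ : Y → ℕ}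
    (hσ : Measurable σ) : Measurable fun t => f (σ t) t :=
  (measurable_from_prod_countable_right (f := fun p : ℕ × Y => f p.1 p.2) hf).comp
    (hσ.prodMk measurable_id)

lemma MeasurableSet.setOf_mem_index {A : ℕ → Set Y} (hA : ∀ i, MeasurableSet (A i))
    {σ : Y → ℕ} (hσ : Measurable σ) : MeasurableSet {y | y ∈ A (σ y)} :=
  measurableSet_setOfPred.2 (Measurable.apply_index (fun i => measurableSet_setOfPred.1 (hA i)) hσ)

lemma exists_measurable_index_forall_le_le {f : ℕ → Y → ℝ≥0∞} (hf : ∀ i, Measurable (f i))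
    (N : ℕ) : ∃ σ : Y → ℕ, Measurable σ ∧ ∀ t, ∀ j ≤ N, f j t ≤ f (σ t) t := by
  classical
  have hex : ∀ t, ∃ i, ∀ j ≤ N, f j t ≤ f i t := fun t => by
    obtain ⟨i, -, hi⟩ :=
      (Finset.range (N + 1)).exists_max_image (f · t) Finset.nonempty_range_add_one
    exact ⟨i, fun j hj => hi j (Finset.mem_range_succ_iff.2 hj)⟩
  refine ⟨fun t => Nat.find (hex t), measurable_find hex fun i => ?_,
    fun t => Nat.find_spec (hex t)⟩
  simp only [Set.ofPred_forall]
  exact .iInter fun j => .iInter fun _ => measurableSet_le (hf j) (hf i)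

/-- Monotone convergence reduces an integral of a countable supremum to integrals along
measurable choices of index, which exist for finite maxima. -/
lemma lintegral_iSup_le_of_forall_measurable_index {f : ℕ → Y → ℝ≥0∞}
    (hf : ∀ i, Measurable (f i)) {μ : Measure Y} {c : ℝ≥0∞}
    (h : ∀ σ : Y → ℕ, Measurable σ → ∫⁻ t, f (σ t) t ∂μ ≤ c) :
    ∫⁻ t, ⨆ i, f i t ∂μ ≤ c := by
  simp_rw [← biSup_le_eq_iSup (f := fun i => f i _)]
  rw [lintegral_iSup (fun N => .iSup fun j => .iSup fun _ => hf j)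
    (fun M N hMN t => biSup_mono fun j hj => hj.trans hMN)]
  refine iSup_le fun N => ?_
  obtain ⟨σ, hσ, hle⟩ := exists_measurable_index_forall_le_le hf N
  exact (lintegral_mono fun t => iSup₂_le (hle t)).trans (h σ hσ)

lemma exists_strictMono_ae_tendsto_zero_of_lintegral {μ : Measure Y} {F : ℕ → Y → ℝ≥0∞}
    (hF : ∀ n, AEMeasurable (F n) μ) (h : Tendsto (fun n => ∫⁻ t, F n t ∂μ) atTop (𝓝 0)) :
    ∃ φ : ℕ → ℕ, StrictMono φ ∧ ∀ᵐ t ∂μ, Tendsto (fun k => F (φ k) t) atTop (𝓝 0) := by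
  obtain ⟨φ, hφ, hlt⟩ := extraction_forall_of_eventually fun k =>
    h.eventually_lt_const (ENNReal.pow_pos (ENNReal.inv_pos.2 ofNat_ne_top) k :
      (0 : ℝ≥0∞) < 2⁻¹ ^ k)
  refine ⟨φ, hφ, ?_⟩
  have hsum : ∫⁻ t, ∑' k, F (φ k) t ∂μ ≠ ∞ := by
    rw [lintegral_tsum fun k => hF (φ k)]
    refine ne_top_of_le_ne_top ?_ (ENNReal.tsum_le_tsum fun k => (hlt k).le)
    rw [ENNReal.tsum_geometric, ENNReal.one_sub_inv_two, inv_inv]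
    exact ofNat_ne_top
  filter_upwards [ae_lt_top' (AEMeasurable.tsum fun k => hF (φ k)) hsum] with t ht
  exact ENNReal.tendsto_atTop_zero_of_tsum_ne_top ht.ne

end IndexedFamilies

namespace IsDisintegration

variable {X Y : Type*} [MeasurableSpace X] [MeasurableSpace Y] {ν : Measure X} {T : X → Y}
  {μ : Measure Y} {lam : Y → Measure X}

lemma measure_eq_lintegral (hd : IsDisintegration ν T μ lam) {S : Set X} (hS : MeasurableSet S) :
    ν S = ∫⁻ t, lam t S ∂μ := by
  simpa [lintegral_indicator_one hS] using hd.2.2 _ (measurable_one.indicator hS)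

lemma aemeasurable_apply (hd : IsDisintegration ν T μ lam) {S : Set X} (hS : MeasurableSet S) :
    AEMeasurable (fun t => lam t S) μ := by
  simpa [lintegral_indicator_one hS] using hd.2.1 _ (measurable_one.indicator hS)

lemma ae_isFiniteMeasure [IsFiniteMeasure ν] (hd : IsDisintegration ν T μ lam) :
    ∀ᵐ t ∂μ, IsFiniteMeasure (lam t) := by
  have hfin : ∫⁻ t, lam t Set.univ ∂μ ≠ ∞ :=
    hd.measure_eq_lintegral .univ ▸ measure_ne_top ν _
  filter_upwards [ae_lt_top' (hd.aemeasurable_apply .univ) hfin] with t ht using ⟨ht⟩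

lemma ae_apply_setOf_mem_section (hd : IsDisintegration ν T μ lam) (𝒮 : Y → Set X) :
    ∀ᵐ t ∂μ, lam t {x | x ∈ 𝒮 (T x)} = lam t (𝒮 t) := by
  filter_upwards [hd.1] with t ht
  have hfiber : {x | x ∈ 𝒮 (T x)} ∩ T ⁻¹' {t} = 𝒮 t ∩ T ⁻¹' {t} := by
    ext x
    constructor <;> rintro ⟨hx, rfl⟩ <;> exact ⟨hx, rfl⟩
  rw [← measure_inter_conull ht, hfiber, measure_inter_conull ht]

lemma measure_setOf_mem_section (hd : IsDisintegration ν T μ lam) {𝒮 : Y → Set X}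
    (h𝒮 : MeasurableSet {x | x ∈ 𝒮 (T x)}) :
    ν {x | x ∈ 𝒮 (T x)} = ∫⁻ t, lam t (𝒮 t) ∂μ :=
  (hd.measure_eq_lintegral h𝒮).trans (lintegral_congr_ae (hd.ae_apply_setOf_mem_section 𝒮))

lemma aemeasurable_apply_section (hd : IsDisintegration ν T μ lam) {𝒮 : Y → Set X}
    (h𝒮 : MeasurableSet {x | x ∈ 𝒮 (T x)}) : AEMeasurable (fun t => lam t (𝒮 t)) μ :=
  (hd.aemeasurable_apply h𝒮).congr (hd.ae_apply_setOf_mem_section 𝒮)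

end IsDisintegration

section FiberwiseBounds

variable {X Y : Type*} [MeasurableSpace X] [MeasurableSpace Y] {T : X → Y} {μ : Measure Y}
  {β γ : Measure X} {lb lg : Y → Measure X}

lemma lintegral_tsub_section_le_tvDist [IsFiniteMeasure γ] (hb : IsDisintegration β T μ lb)
    (hg : IsDisintegration γ T μ lg) {𝒮 : Y → Set X} (h𝒮 : MeasurableSet {x | x ∈ 𝒮 (T x)})
    (hle : ∀ᵐ t ∂μ, lg t (𝒮 t) ≤ lb t (𝒮 t)) :
    ∫⁻ t, (lb t (𝒮 t) - lg t (𝒮 t)) ∂μ ≤ tvDist β γ :=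
  calc ∫⁻ t, (lb t (𝒮 t) - lg t (𝒮 t)) ∂μ
      = ∫⁻ t, lb t (𝒮 t) ∂μ - ∫⁻ t, lg t (𝒮 t) ∂μ :=
        lintegral_sub' (hg.aemeasurable_apply_section h𝒮)
          (hg.measure_setOf_mem_section h𝒮 ▸ measure_ne_top γ _) hle
    _ = β {x | x ∈ 𝒮 (T x)} - γ {x | x ∈ 𝒮 (T x)} := by
        rw [hb.measure_setOf_mem_section h𝒮, hg.measure_setOf_mem_section h𝒮]
    _ ≤ tvDist β γ := le_iSup₂_of_le _ h𝒮 le_self_add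

lemma lintegral_iSup_tsub_le_tvDist [IsFiniteMeasure γ] (hT : Measurable T)
    (hb : IsDisintegration β T μ lb) (hg : IsDisintegration γ T μ lg) {A : ℕ → Set X}
    (hA : ∀ i, MeasurableSet (A i)) :
    ∫⁻ t, ⨆ i, (lb t (A i) - lg t (A i)) ∂μ ≤ tvDist β γ := by
  set p := fun i => (hb.aemeasurable_apply (hA i)).mk
  set q := fun i => (hg.aemeasurable_apply (hA i)).mk
  have hp : ∀ i, Measurable (p i) := fun i => AEMeasurable.measurable_mk _
  have hq : ∀ i, Measurable (q i) := fun i => AEMeasurable.measurable_mk _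
  have hpq : ∀ᵐ t ∂μ, ∀ i, lb t (A i) = p i t ∧ lg t (A i) = q i t := ae_all_iff.2 fun i =>
    (hb.aemeasurable_apply (hA i)).ae_eq_mk.and (hg.aemeasurable_apply (hA i)).ae_eq_mk
  calc ∫⁻ t, ⨆ i, (lb t (A i) - lg t (A i)) ∂μ = ∫⁻ t, ⨆ i, (p i t - q i t) ∂μ :=
        lintegral_congr_ae (hpq.mono fun t ht => by simp only [ht])
    _ ≤ tvDist β γ := lintegral_iSup_le_of_forall_measurable_index
        (fun i => (hp i).sub (hq i)) fun σ hσ => ?_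
  -- Measurable versions `p`, `q` make the region `R` measurable; cutting the section down to `R`,
  -- where the chosen difference is nonnegative, makes `lintegral_tsub_section_le_tvDist` apply.
  set R := {t | q (σ t) t ≤ p (σ t) t}
  have hR : MeasurableSet R :=
    measurableSet_le (Measurable.apply_index hq hσ) (Measurable.apply_index hp hσ)
  set 𝒮 : Y → Set X := fun t => {x | t ∈ R ∧ x ∈ A (σ t)}
  have h𝒮 : MeasurableSet {x | x ∈ 𝒮 (T x)} := (hT hR).inter (.setOf_mem_index hA (hσ.comp hT))
  have hsec : ∀ᵐ t ∂μ, p (σ t) t - q (σ t) t = lb t (𝒮 t) - lg t (𝒮 t) ∧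
      lg t (𝒮 t) ≤ lb t (𝒮 t) := by
    filter_upwards [hpq] with t ht
    by_cases htR : t ∈ R
    · have h𝒮t : 𝒮 t = A (σ t) := by ext; simp [𝒮, htR]
      rw [h𝒮t, (ht (σ t)).1, (ht (σ t)).2]
      exact ⟨rfl, htR⟩
    · have h𝒮t : 𝒮 t = ∅ := by ext; simp [𝒮, htR]
      simp only [h𝒮t, measure_empty, tsub_zero, le_refl, and_true]
      exact tsub_eq_zero_of_le (le_of_not_ge htR)
  calc ∫⁻ t, (p (σ t) t - q (σ t) t) ∂μ = ∫⁻ t, (lb t (𝒮 t) - lg t (𝒮 t)) ∂μ :=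
        lintegral_congr_ae (hsec.mono fun t ht => ht.1)
    _ ≤ tvDist β γ := lintegral_tsub_section_le_tvDist hb hg h𝒮 (hsec.mono fun t ht => ht.2)

lemma lintegral_iSup_tsub_add_tsub_le_two_mul_tvDist [IsFiniteMeasure β] [IsFiniteMeasure γ]
    (hT : Measurable T) (hb : IsDisintegration β T μ lb) (hg : IsDisintegration γ T μ lg)
    {A : ℕ → Set X} (hA : ∀ i, MeasurableSet (A i)) :
    ∫⁻ t, ⨆ i, ((lb t (A i) - lg t (A i)) + (lg t (A i) - lb t (A i))) ∂μ ≤ 2 * tvDist β γ :=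
  calc _ ≤ ∫⁻ t, ((⨆ i, (lb t (A i) - lg t (A i))) + ⨆ i, (lg t (A i) - lb t (A i))) ∂μ :=
        lintegral_mono fun t => iSup_le fun i =>
          add_le_add (le_iSup (fun i => lb t (A i) - lg t (A i)) i)
            (le_iSup (fun i => lg t (A i) - lb t (A i)) i)
    _ = (∫⁻ t, ⨆ i, (lb t (A i) - lg t (A i)) ∂μ) + ∫⁻ t, ⨆ i, (lg t (A i) - lb t (A i)) ∂μ :=
        lintegral_add_left' (.iSup fun i =>
          (hb.aemeasurable_apply (hA i)).sub (hg.aemeasurable_apply (hA i))) _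
    _ ≤ tvDist β γ + tvDist γ β := add_le_add (lintegral_iSup_tsub_le_tvDist hT hb hg hA)
        (lintegral_iSup_tsub_le_tvDist hT hg hb hA)
    _ = 2 * tvDist β γ := by rw [tvDist_comm γ β, two_mul]

lemma ae_tvDist_le_iSup_of_generateFrom [IsFiniteMeasure β] [IsFiniteMeasure γ]
    (hb : IsDisintegration β T μ lb) (hg : IsDisintegration γ T μ lg) {A : ℕ → Set X}
    (hA : IsSetAlgebra (Set.range A))
    (hgen : ‹MeasurableSpace X› = MeasurableSpace.generateFrom (Set.range A)) :
    ∀ᵐ t ∂μ, tvDist (lb t) (lg t) ≤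
      ⨆ i, ((lb t (A i) - lg t (A i)) + (lg t (A i) - lb t (A i))) := by
  filter_upwards [hb.ae_isFiniteMeasure, hg.ae_isFiniteMeasure] with t _ _
  exact tvDist_le_iSup_of_generateFrom _ _ hA hgen

end FiberwiseBounds

theorem disintegration_total_variation_limit_general
    {X Y : Type*} [MetricSpace X] [CompactSpace X]
    [MeasurableSpace X] [BorelSpace X]
    [MeasurableSpace Y]
    (ν₀ : Measure X) [IsFiniteMeasure ν₀]
    (νn : ℕ → Measure X) [∀ n, IsFiniteMeasure (νn n)]
    (htv : Filter.Tendsto (fun n => tvDist (νn n) ν₀) Filter.atTop (nhds 0))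
    (T : X → Y) (hT : Measurable T)
    (μ : Measure Y)
    (lamn : ℕ → Y → Measure X) (lam₀ : Y → Measure X)
    (hdisn : ∀ n, IsDisintegration (νn n) T μ (lamn n))
    (hdis₀ : IsDisintegration ν₀ T μ lam₀) :
    ∃ E : Set Y, μ E = 0 ∧ ∃ φ : ℕ → ℕ, StrictMono φ ∧
      ∀ t ∉ E, Filter.Tendsto (fun k => tvDist (lamn (φ k) t) (lam₀ t))
        Filter.atTop (nhds 0) := by
  obtain ⟨A, hA, hgen⟩ := MeasurableSpace.exists_isSetAlgebra_range_generateFrom X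
  have hAm : ∀ i, MeasurableSet (A i) := fun i =>
    hgen ▸ MeasurableSpace.measurableSet_generateFrom (Set.mem_range_self i)
  set G : ℕ → Y → ℝ≥0∞ := fun n t =>
    ⨆ i, ((lamn n t (A i) - lam₀ t (A i)) + (lam₀ t (A i) - lamn n t (A i)))
  have hGm : ∀ n, AEMeasurable (G n) μ := fun n => .iSup fun i =>
    (((hdisn n).aemeasurable_apply (hAm i)).sub (hdis₀.aemeasurable_apply (hAm i))).add
      ((hdis₀.aemeasurable_apply (hAm i)).sub ((hdisn n).aemeasurable_apply (hAm i)))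
  have hGint : Tendsto (fun n => ∫⁻ t, G n t ∂μ) atTop (𝓝 0) := by
    refine tendsto_of_tendsto_of_tendsto_of_le_of_le tendsto_const_nhds
      (by simpa using ENNReal.Tendsto.const_mul htv (Or.inr ofNat_ne_top) :
        Tendsto (fun n => 2 * tvDist (νn n) ν₀) atTop (𝓝 0))
      (fun _ => zero_le) fun n =>
        lintegral_iSup_tsub_add_tsub_le_two_mul_tvDist hT (hdisn n) hdis₀ hAm
  obtain ⟨φ, hφ, hGφ⟩ := exists_strictMono_ae_tendsto_zero_of_lintegral hGm hGint
  have hfiber : ∀ᵐ t ∂μ, Tendsto (fun k => tvDist (lamn (φ k) t) (lam₀ t)) atTop (𝓝 0) := by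
    filter_upwards [hGφ, ae_all_iff.2 fun n =>
      ae_tvDist_le_iSup_of_generateFrom (hdisn n) hdis₀ hA hgen] with t hGt hle
    exact tendsto_of_tendsto_of_tendsto_of_le_of_le tendsto_const_nhds hGt
      (fun _ => zero_le) fun k => hle (φ k)
  exact ⟨_, ae_iff.1 hfiber, φ, hφ, fun t ht => not_not.1 ht⟩

theorem disintegration_total_variation_limit
    {X Y : Type*} [MetricSpace X] [CompactSpace X]
    [MeasurableSpace X] [BorelSpace X]
    [MeasurableSpace Y] [MeasurableSpace.CountablyGenerated Y] [MeasurableSingletonClass Y]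
    (ν : Measure X) [IsFiniteMeasure ν]
    (ν₀ : Measure X) [IsFiniteMeasure ν₀] (hν₀ : ν₀ ≠ 0)
    (νn : ℕ → Measure X) [∀ n, IsFiniteMeasure (νn n)]
    (habsn : ∀ n, νn n ≪ ν) (habs₀ : ν₀ ≪ ν)
    (htv : Filter.Tendsto (fun n => tvDist (νn n) ν₀) Filter.atTop (nhds 0))
    (T : X → Y) (hT : Measurable T)
    (μ : Measure Y) [SigmaFinite μ]
    (habs : ν.map T ≪ μ)
    (lamn : ℕ → Y → Measure X) (lam₀ lam : Y → Measure X)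
    (hdisn : ∀ n, IsDisintegration (νn n) T μ (lamn n))
    (hdis₀ : IsDisintegration ν₀ T μ lam₀)
    (hdis : IsDisintegration ν T μ lam) :
    ∃ E : Set Y, μ E = 0 ∧ ∃ φ : ℕ → ℕ, StrictMono φ ∧
      ∀ t ∉ E, Filter.Tendsto (fun k => tvDist (lamn (φ k) t) (lam₀ t))
        Filter.atTop (nhds 0) :=
  disintegration_total_variation_limit_general ν₀ νn htv T hT μ lamn lam₀ hdisn hdis₀
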